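/- Let Φ = R S_{N²} with S_{N²} = S_{n²} ⊗ S_{δ²} a STOne matrix and R a block-diagonal row selector where each δ²×δ² block R_i has r_i ≥ 1 nonzero diagonal entries. Then the least-squares solution of the preview equation min_u ‖R S_{N²} P u − b‖² with P = I_{n²} ⊗ 1_{δ²} is u = S_{n²} b̂, where b̂_i is the average of the measured entries of b in block i. -/

import Mathlib

open Matrix Kronecker

noncomputable def S4 : Matrix (Fin 4) (Fin 4) ℝ :=
  Matrix.of fun i j => if i = j then -1/2 else 1/2

/-- The STOne matrix `S_{4^k}`, the `k`-fold Kronecker power of `S4`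
(with `S_{4^{k+1}} = S4 ⊗ S_{4^k}` and base case `S_{4^1} = S4`). -/
noncomputable def STOne : (k : ℕ) → Matrix (Fin (4^k)) (Fin (4^k)) ℝ
  | 0 => 1
  | k + 1 =>
    Matrix.reindex (finProdFinEquiv.trans (finCongr (by ring)))
      (finProdFinEquiv.trans (finCongr (by ring))) (S4 ⊗ₖ STOne k)


/-! Since `P u = u ⊗ 1` and `S_{δ²}` has unit row sums, `(S_{n²} ⊗ S_{δ²}) P u = (S_{n²} u) ⊗ 1`;
the selector `R` then keeps, in block `i`, exactly the rows `γ ∈ K i`, each equal to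
`v_i = (S_{n²} u)_i`. The residual thus splits into a constant (the unmeasured rows) plus, per
block, `∑_{γ ∈ K i} (v_i - b_{i,γ})²`, which is its value at the block average `b̂_i` plus
`|K i| (v_i - b̂_i)²`. So `v = b̂` is the unique minimiser, and as `S_{n²}` is an involution,
`u = S_{n²} b̂`. -/

lemma S4_mul_self : S4 * S4 = 1 := by
  ext i j
  fin_cases i <;> fin_cases j <;> simp [S4, Matrix.mul_apply, Fin.sum_univ_four] <;> norm_num

lemma S4_row_sum (i : Fin 4) : ∑ j, S4 i j = 1 := by
  fin_cases i <;> simp [S4, Fin.sum_univ_four] <;> norm_num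

lemma STOne_mul_self : ∀ k, STOne k * STOne k = 1
  | 0 => by simp [STOne]
  | k + 1 => by
    rw [STOne, Matrix.reindex_apply, Matrix.submatrix_mul_equiv, ← Matrix.mul_kronecker_mul,
      S4_mul_self, STOne_mul_self k, Matrix.one_kronecker_one, Matrix.submatrix_one_equiv]

lemma STOne_mulVec_STOne_mulVec (k : ℕ) (v : Fin (4^k) → ℝ) :
    STOne k *ᵥ (STOne k *ᵥ v) = v := by
  rw [mulVec_mulVec, STOne_mul_self, one_mulVec]

lemma STOne_row_sum : ∀ k, ∀ i, ∑ j, STOne k i j = 1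
  | 0, i => by
    obtain rfl : i = 0 := by omega
    simp [STOne]
  | k + 1, i => by
    rw [STOne]
    simp only [Matrix.reindex_apply, Matrix.submatrix_apply]
    rw [← Equiv.sum_comp (finProdFinEquiv.trans (finCongr (by ring : 4 * 4^k = 4^(k+1)))),
      Fintype.sum_prod_type]
    simp only [Equiv.symm_apply_apply, Matrix.kroneckerMap_apply]
    rw [← Finset.sum_mul_sum, S4_row_sum, STOne_row_sum k, mul_one]

def blockMask {ι κ α : Type*} [Zero α] [DecidableEq κ] (K : ι → Finset κ) (v : ι → α) :
    ι × κ → α :=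
  fun p => if p.2 ∈ K p.1 then v p.1 else 0

section Matrices

variable {ι κ ι' κ' α : Type*} [CommSemiring α]

lemma spread_mulVec [Fintype ι'] [DecidableEq ι'] (u : ι' → α) :
    (Matrix.of fun (q : ι' × κ') j => if q.1 = j then (1 : α) else 0) *ᵥ u = fun q => u q.1 := by
  ext q
  simp [mulVec, dotProduct]

lemma kronecker_mulVec_comp_fst [Fintype ι'] [Fintype κ'] (S : Matrix ι ι' α) (T : Matrix κ κ' α)
    (hT : ∀ γ, ∑ δ, T γ δ = 1) (u : ι' → α) :
    (S ⊗ₖ T) *ᵥ (fun q : ι' × κ' => u q.1) = fun p => (S *ᵥ u) p.1 := by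
  ext p
  simp only [mulVec, dotProduct, Fintype.sum_prod_type, kroneckerMap_apply]
  refine Finset.sum_congr rfl fun j _ => ?_
  rw [← Finset.sum_mul, ← Finset.mul_sum, hT, mul_one]

lemma selector_mulVec [Fintype ι] [Fintype κ] [DecidableEq ι] [DecidableEq κ]
    (K : ι → Finset κ) (w : ι × κ → α) :
    (Matrix.of fun p q : ι × κ => if p = q ∧ p.2 ∈ K p.1 then (1 : α) else 0) *ᵥ w
      = fun p => if p.2 ∈ K p.1 then w p else 0 := by
  ext p
  simp [mulVec, dotProduct, ite_and]

lemma selector_mul_kronecker_mul_spread_mulVec [Fintype ι] [Fintype κ] [Fintype ι'] [Fintype κ']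
    [DecidableEq ι] [DecidableEq κ] [DecidableEq ι'] (K : ι → Finset κ)
    (S : Matrix ι ι' α) (T : Matrix κ κ' α) (hT : ∀ γ, ∑ δ, T γ δ = 1) (u : ι' → α) :
    ((Matrix.of fun p q : ι × κ => if p = q ∧ p.2 ∈ K p.1 then (1 : α) else 0) * (S ⊗ₖ T) *
        Matrix.of fun (q : ι' × κ') j => if q.1 = j then (1 : α) else 0) *ᵥ u
      = blockMask K (S *ᵥ u) := by
  rw [← mulVec_mulVec, ← mulVec_mulVec, spread_mulVec, kronecker_mulVec_comp_fst S T hT,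
    selector_mulVec]
  rfl

end Matrices

lemma sum_sq_sub_eq_sum_sq_sub_average_add {β : Type*} (s : Finset β) (g : β → ℝ) (c : ℝ) :
    ∑ γ ∈ s, (c - g γ)^2
      = ∑ γ ∈ s, ((∑ δ ∈ s, g δ) / s.card - g γ)^2 + s.card * (c - (∑ δ ∈ s, g δ) / s.card)^2 := by
  rcases s.eq_empty_or_nonempty with rfl | hs
  · simp
  set m := (∑ δ ∈ s, g δ) / s.card
  have hcard : (s.card : ℝ) ≠ 0 := by exact_mod_cast hs.card_pos.ne'
  have hcentered : ∑ γ ∈ s, (m - g γ) = 0 := by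
    rw [Finset.sum_sub_distrib, Finset.sum_const, nsmul_eq_mul, mul_div_cancel₀ _ hcard, sub_self]
  have hexpand : ∀ γ, (c - g γ)^2 = (m - g γ)^2 + 2 * (c - m) * (m - g γ) + (c - m)^2 :=
    fun γ => by ring
  simp only [hexpand, Finset.sum_add_distrib, ← Finset.mul_sum, hcentered, mul_zero, add_zero,
    Finset.sum_const, nsmul_eq_mul]

section BlockLeastSquares

variable {ι κ : Type*} [Fintype ι] [Fintype κ] [DecidableEq κ]

noncomputable def blockAverage (K : ι → Finset κ) (b : ι × κ → ℝ) : ι → ℝ :=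
  fun i => (∑ γ ∈ K i, b (i, γ)) / (K i).card

lemma sum_sq_blockMask_sub (K : ι → Finset κ) (b : ι × κ → ℝ) (v : ι → ℝ) :
    ∑ p, (blockMask K v p - b p)^2
      = ∑ i, (∑ γ ∈ K i, (v i - b (i, γ))^2 + ∑ γ ∈ (K i)ᶜ, b (i, γ)^2) := by
  rw [Fintype.sum_prod_type]
  refine Finset.sum_congr rfl fun i _ => ?_
  rw [← Finset.sum_add_sum_compl (K i)]
  congr 1 <;> refine Finset.sum_congr rfl fun γ hγ => ?_
  · simp [blockMask, hγ]
  · simp [blockMask, Finset.mem_compl.mp hγ]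

lemma sum_sq_blockMask_sub_eq_average_add (K : ι → Finset κ) (b : ι × κ → ℝ) (v : ι → ℝ) :
    ∑ p, (blockMask K v p - b p)^2
      = ∑ p, (blockMask K (blockAverage K b) p - b p)^2
        + ∑ i, ((K i).card : ℝ) * (v i - blockAverage K b i)^2 := by
  rw [sum_sq_blockMask_sub, sum_sq_blockMask_sub, ← Finset.sum_add_distrib]
  refine Finset.sum_congr rfl fun i _ => ?_
  rw [sum_sq_sub_eq_sum_sq_sub_average_add (K i) (fun γ => b (i, γ)) (v i), blockAverage]
  ring

lemma sum_sq_blockMask_average_sub_le (K : ι → Finset κ) (b : ι × κ → ℝ) (v : ι → ℝ) :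
    ∑ p, (blockMask K (blockAverage K b) p - b p)^2 ≤ ∑ p, (blockMask K v p - b p)^2 := by
  rw [sum_sq_blockMask_sub_eq_average_add K b v, le_add_iff_nonneg_right]
  positivity

lemma eq_blockAverage_of_sum_sq_blockMask_sub_eq {K : ι → Finset κ} (hK : ∀ i, (K i).Nonempty)
    {b : ι × κ → ℝ} {v : ι → ℝ}
    (h : ∑ p, (blockMask K v p - b p)^2 = ∑ p, (blockMask K (blockAverage K b) p - b p)^2) :
    v = blockAverage K b := by
  rw [sum_sq_blockMask_sub_eq_average_add K b v, add_eq_left,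
    Finset.sum_eq_zero_iff_of_nonneg fun i _ => by positivity] at h
  funext i
  have hcard : ((K i).card : ℝ) ≠ 0 := by exact_mod_cast (hK i).card_pos.ne'
  simpa [hcard, sub_eq_zero] using h i (Finset.mem_univ i)

end BlockLeastSquares

theorem STOne_preview_least_squares_general (a d : ℕ)
    (K : Fin (4^a) → Finset (Fin (4^d))) (hK : ∀ i, (K i).Nonempty)
    (R : Matrix (Fin (4^a) × Fin (4^d)) (Fin (4^a) × Fin (4^d)) ℝ)
    (hR : R = Matrix.of fun p q => if p = q ∧ p.2 ∈ K p.1 then 1 else 0)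
    (P : Matrix (Fin (4^a) × Fin (4^d)) (Fin (4^a)) ℝ)
    (hP : P = Matrix.of fun p j => if p.1 = j then 1 else 0)
    (b : Fin (4^a) × Fin (4^d) → ℝ)
    (bhat : Fin (4^a) → ℝ)
    (hbhat : ∀ i, bhat i = (∑ γ ∈ K i, b (i, γ)) / (K i).card)
    (f : (Fin (4^a) → ℝ) → ℝ)
    (hf : ∀ u, f u = ∑ p : Fin (4^a) × Fin (4^d),
      ((R * (STOne a ⊗ₖ STOne d) * P).mulVec u p - b p)^2)
    (ustar : Fin (4^a) → ℝ) (hustar : ustar = (STOne a).mulVec bhat) :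
    (∀ u, f ustar ≤ f u) ∧ (∀ u, f u = f ustar → u = ustar) := by
  obtain rfl : bhat = blockAverage K b := funext hbhat
  subst hR hP hustar
  have hf_mask : ∀ u, f u = ∑ p, (blockMask K (STOne a *ᵥ u) p - b p)^2 := fun u => by
    rw [hf, selector_mul_kronecker_mul_spread_mulVec K _ _ (STOne_row_sum d)]
  simp only [hf_mask, STOne_mulVec_STOne_mulVec]
  refine ⟨fun u => sum_sq_blockMask_average_sub_le K b _, fun u hu => ?_⟩
  rw [← eq_blockAverage_of_sum_sq_blockMask_sub_eq hK hu, STOne_mulVec_STOne_mulVec]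

/-- Least-squares preview theorem: when each block `i` has a nonempty set `K i`
of selected rows, the least-squares solution of `min_u ‖R S_{N²} P u − b‖²`
is `u = S_{n²} b̂` where `b̂ i` is the average of the measured entries in block `i`. -/
theorem STOne_preview_least_squares (a d : ℕ) (ha : 1 ≤ a) (hd : 1 ≤ d)
    (K : Fin (4^a) → Finset (Fin (4^d))) (hK : ∀ i, (K i).Nonempty)
    (R : Matrix (Fin (4^a) × Fin (4^d)) (Fin (4^a) × Fin (4^d)) ℝ)
    (hR : R = Matrix.of fun p q => if p = q ∧ p.2 ∈ K p.1 then 1 else 0)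
    (P : Matrix (Fin (4^a) × Fin (4^d)) (Fin (4^a)) ℝ)
    (hP : P = Matrix.of fun p j => if p.1 = j then 1 else 0)
    (b : Fin (4^a) × Fin (4^d) → ℝ)
    (hb : ∀ p : Fin (4^a) × Fin (4^d), p.2 ∉ K p.1 → b p = 0)
    (bhat : Fin (4^a) → ℝ)
    (hbhat : ∀ i, bhat i = (∑ γ ∈ K i, b (i, γ)) / (K i).card)
    (f : (Fin (4^a) → ℝ) → ℝ)
    (hf : ∀ u, f u = ∑ p : Fin (4^a) × Fin (4^d),
      ((R * (STOne a ⊗ₖ STOne d) * P).mulVec u p - b p)^2)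
    (ustar : Fin (4^a) → ℝ) (hustar : ustar = (STOne a).mulVec bhat) :
    (∀ u, f ustar ≤ f u) ∧ (∀ u, f u = f ustar → u = ustar) :=
  STOne_preview_least_squares_general a d K hK R hR P hP b bhat hbhat f hf ustar hustar
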